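/- Let G be a graph with |V(G)| ≥ 2 and let M be a module of G. Then the strong modules of G[M] are exactly the strong modules of G that are properly contained in M, together with M itself. -/

import Mathlib

/-- `M` is a module of `G`: every vertex outside `M` is adjacent to all of `M` or to none. -/
def SimpleGraph.IsModule {V : Type*} (G : SimpleGraph V) (M : Set V) : Prop :=
  ∀ v ∉ M, (∀ m ∈ M, G.Adj v m) ∨ (∀ m ∈ M, ¬ G.Adj v m)

/-- `G` is prime: at least 4 vertices and all modules are trivial. -/
def SimpleGraph.IsPrimeGraph {V : Type*} [Fintype V] (G : SimpleGraph V) : Prop :=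
  4 ≤ Fintype.card V ∧
    ∀ M : Set V, G.IsModule M → M = ∅ ∨ (∃ v, M = {v}) ∨ M = Set.univ

/-- `H` on `V ⊕ W` is an extension of `G` on `V`: it induces `G` on the `inl` copy of `V`. -/
def SimpleGraph.IsExtension {V W : Type*} (G : SimpleGraph V) (H : SimpleGraph (V ⊕ W)) : Prop :=
  ∀ u v : V, H.Adj (Sum.inl u) (Sum.inl v) ↔ G.Adj u v

/-- The prime bound of `G`: the least `p` such that `G` has a prime `p`-extension. -/
noncomputable def SimpleGraph.primeBound {V : Type*} [Fintype V] (G : SimpleGraph V) : ℕ :=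
  sInf {p : ℕ | ∃ H : SimpleGraph (V ⊕ Fin p), G.IsExtension H ∧ H.IsPrimeGraph}

/-- The modular clique number: largest size of a module of `G` that is a clique. -/
noncomputable def SimpleGraph.modularCliqueNumber {V : Type*} [Fintype V]
    (G : SimpleGraph V) : ℕ :=
  sSup {n : ℕ | ∃ M : Set V, G.IsModule M ∧ G.IsClique M ∧ M.ncard = n}

/-- The modular stability number: `ω_M` of the complement. -/
noncomputable def SimpleGraph.modularStabilityNumber {V : Type*} [Fintype V]
    (G : SimpleGraph V) : ℕ :=
  Gᶜ.modularCliqueNumber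

/-- The number of isolated vertices of `G`. -/
noncomputable def SimpleGraph.isolatedCount {V : Type*} [Fintype V] (G : SimpleGraph V) : ℕ :=
  {v : V | ∀ w, ¬ G.Adj v w}.ncard

/-- `P` is a modular partition of `G`. -/
def SimpleGraph.IsModularPartition {V : Type*} (G : SimpleGraph V) (P : Set (Set V)) : Prop :=
  (∀ X ∈ P, X.Nonempty) ∧ ⋃₀ P = Set.univ ∧ P.Pairwise Disjoint ∧ ∀ X ∈ P, G.IsModule X

/-- The quotient graph `G/P` of a (modular) partition `P`. -/
def SimpleGraph.quotientGraph {V : Type*} (G : SimpleGraph V) (P : Set (Set V)) :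
    SimpleGraph P where
  Adj X Y := (X : Set V) ≠ (Y : Set V) ∧ ∃ u ∈ (X : Set V), ∃ v ∈ (Y : Set V), G.Adj u v
  symm := by
    refine ⟨?_⟩
    rintro X Y ⟨hne, u, hu, v, hv, h⟩
    exact ⟨fun h' => hne h'.symm, v, hv, u, hu, h.symm⟩
  loopless := by
    refine ⟨?_⟩
    rintro X ⟨hne, -⟩
    exact hne rfl

/-- `M` is a strong module of `G`. -/
def SimpleGraph.IsStrongModule {V : Type*} (G : SimpleGraph V) (M : Set V) : Prop :=
  G.IsModule M ∧ ∀ N : Set V, G.IsModule N → (M ∩ N).Nonempty → M ⊆ N ∨ N ⊆ M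

/-! Since `M` is a module, the modules of `G[M]` are exactly the modules of `G` inside `M`. For a
strong module `S ⊊ M` of `G[M]`, the only difficulty is a module `P` of `G` that meets `S` and
leaves `M`. Strength in `G[M]` gives `S ⊆ P` or `M ∩ P ⊆ S`; in the latter case `M \ P` is again
a module, and it cannot meet `S` without forcing `M ⊆ S`, so again `S ⊆ P`. -/

namespace SimpleGraph

variable {V : Type*} {G : SimpleGraph V} {M : Set V}

theorem IsModule.preimage_val {P : Set V} (hP : G.IsModule P) :
    (G.induce M).IsModule (Subtype.val ⁻¹' P) :=
  fun v hv => (hP v hv).imp (fun h m hm => h m hm) (fun h m hm => h m hm)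

theorem IsModule.image_val {Q : Set M} (hQ : (G.induce M).IsModule Q) (hM : G.IsModule M) :
    G.IsModule (Subtype.val '' Q) := by
  intro v hv
  by_cases hvM : v ∈ M
  · rcases hQ ⟨v, hvM⟩ (fun hvQ => hv ⟨_, hvQ, rfl⟩) with h | h
    · exact Or.inl (by rintro _ ⟨m, hm, rfl⟩; exact h m hm)
    · exact Or.inr (by rintro _ ⟨m, hm, rfl⟩; exact h m hm)
  · rcases hM v hvM with h | h
    · exact Or.inl (by rintro _ ⟨m, -, rfl⟩; exact h m m.2)
    · exact Or.inr (by rintro _ ⟨m, -, rfl⟩; exact h m m.2)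

/-- A vertex `y ∈ B \ A` decides, for each `v ∈ A ∩ B`, adjacency of `v` to all of `A \ B`:
`v` and `y` both lie in the module `B`, and `y` lies outside the module `A`. -/
theorem IsModule.diff {A B : Set V} (hA : G.IsModule A) (hB : G.IsModule B) (hBA : ¬ B ⊆ A) :
    G.IsModule (A \ B) := by
  obtain ⟨y, hyB, hyA⟩ := Set.not_subset.1 hBA
  intro v hv
  by_cases hvA : v ∈ A
  · have hvB : v ∈ B := by_contra fun hvB => hv ⟨hvA, hvB⟩
    have hsame : ∀ m ∈ A \ B, (G.Adj v m ↔ G.Adj y m) := by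
      rintro m ⟨-, hmB⟩
      rcases hB m hmB with h | h
      · exact ⟨fun _ => (h y hyB).symm, fun _ => (h v hvB).symm⟩
      · exact ⟨fun hvm => absurd hvm.symm (h v hvB), fun hym => absurd hym.symm (h y hyB)⟩
    rcases hA y hyA with h | h
    · exact Or.inl fun m hm => (hsame m hm).2 (h m hm.1)
    · exact Or.inr fun m hm hvm => h m hm.1 ((hsame m hm).1 hvm)
  · exact (hA v hvA).imp (fun h m hm => h m hm.1) (fun h m hm => h m hm.1)

theorem isModule_induce_preimage_val_iff (hM : G.IsModule M) {S : Set V} (hS : S ⊆ M) :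
    (G.induce M).IsModule (Subtype.val ⁻¹' S) ↔ G.IsModule S := by
  refine ⟨fun h => ?_, IsModule.preimage_val⟩
  simpa [Subtype.image_preimage_coe, Set.inter_eq_right.2 hS] using h.image_val hM

theorem isStrongModule_univ : G.IsStrongModule Set.univ :=
  ⟨fun v hv => absurd (Set.mem_univ v) hv, fun _ _ _ => Or.inr (Set.subset_univ _)⟩

theorem IsStrongModule.subset_or_inter_subset_of_induce {S P : Set V}
    (h : (G.induce M).IsStrongModule (Subtype.val ⁻¹' S)) (hS : S ⊆ M) (hP : G.IsModule P)
    (hSP : (S ∩ P).Nonempty) : S ⊆ P ∨ M ∩ P ⊆ S := by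
  obtain ⟨x, hxS, hxP⟩ := hSP
  refine (h.2 _ hP.preimage_val ⟨⟨x, hS hxS⟩, hxS, hxP⟩).imp (fun hSP => ?_) (fun hPS => ?_)
  · exact (Set.preimage_subset_preimage_iff (by rwa [Subtype.range_coe])).1 hSP
  · exact fun v ⟨hvM, hvP⟩ => hPS (a := ⟨v, hvM⟩) hvP

theorem IsStrongModule.of_induce_preimage_val (hM : G.IsModule M) {S : Set V} (hS : S ⊆ M)
    (hSM : S ≠ M) (h : (G.induce M).IsStrongModule (Subtype.val ⁻¹' S)) :
    G.IsStrongModule S := by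
  refine ⟨(isModule_induce_preimage_val_iff hM hS).1 h.1, fun P hP hSP => ?_⟩
  rcases h.subset_or_inter_subset_of_induce hS hP hSP with hSP' | hPS
  · exact Or.inl hSP'
  by_cases hPM : P ⊆ M
  · exact Or.inr (Set.inter_eq_right.2 hPM ▸ hPS)
  by_cases hSMP : (S ∩ (M \ P)).Nonempty
  · exfalso
    rcases h.subset_or_inter_subset_of_induce hS (hM.diff hP hPM) hSMP with hSMP' | hMPS
    · obtain ⟨x, hxS, hxP⟩ := hSP
      exact (hSMP' hxS).2 hxP
    · refine hSM (hS.antisymm fun v hvM => ?_)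
      by_cases hvP : v ∈ P
      · exact hPS ⟨hvM, hvP⟩
      · exact hMPS ⟨hvM, hvM, hvP⟩
  · exact Or.inl fun v hvS => by_contra fun hvP => hSMP ⟨v, hvS, hS hvS, hvP⟩

theorem IsStrongModule.induce_preimage_val (hM : G.IsModule M) {S : Set V}
    (h : G.IsStrongModule S) : (G.induce M).IsStrongModule (Subtype.val ⁻¹' S) := by
  refine ⟨h.1.preimage_val, fun Q hQ ⟨z, hzS, hzQ⟩ => ?_⟩
  refine (h.2 _ (hQ.image_val hM) ⟨z, hzS, z, hzQ, rfl⟩).imp (fun hSQ => ?_)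
    Set.image_subset_iff.1
  rw [← Set.preimage_image_eq Q Subtype.val_injective]
  exact Set.preimage_mono hSQ

theorem isStrongModule_induce_preimage_val_iff (hM : G.IsModule M) {S : Set V} (hS : S ⊆ M)
    (hSM : S ≠ M) : (G.induce M).IsStrongModule (Subtype.val ⁻¹' S) ↔ G.IsStrongModule S :=
  ⟨IsStrongModule.of_induce_preimage_val hM hS hSM, IsStrongModule.induce_preimage_val hM⟩

end SimpleGraph

theorem strong_modules_of_induced_general {V : Type*} (G : SimpleGraph V)
    (M : Set V) (hM : G.IsModule M) :
    ∀ N : Set M, (G.induce M).IsStrongModule N ↔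
      ((G.IsStrongModule (Subtype.val '' N) ∧ Subtype.val '' N ⊂ M) ∨
        Subtype.val '' N = M) := by
  intro N
  have hN : N = Subtype.val ⁻¹' (Subtype.val '' N) :=
    (Set.preimage_image_eq N Subtype.val_injective).symm
  have hS : Subtype.val '' N ⊆ M := Subtype.coe_image_subset M N
  by_cases hSM : Subtype.val '' N = M
  · rw [hN, hSM, Subtype.coe_preimage_self]
    exact iff_of_true SimpleGraph.isStrongModule_univ (Or.inr (by simp))
  · rw [hN, SimpleGraph.isStrongModule_induce_preimage_val_iff hM hS hSM]
    simp [hSM, hS.ssubset_of_ne hSM]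

/-- the strong modules of `G[M]` are exactly the strong modules of `G`
properly contained in `M`, together with `M` itself. -/
theorem strong_modules_of_induced {V : Type*} (G : SimpleGraph V)
    (hcard : 2 ≤ Nat.card V) (M : Set V) (hM : G.IsModule M) :
    ∀ N : Set M, (G.induce M).IsStrongModule N ↔
      ((G.IsStrongModule (Subtype.val '' N) ∧ Subtype.val '' N ⊂ M) ∨
        Subtype.val '' N = M) :=
  strong_modules_of_induced_general G M hM
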